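/- arXiv:2001.04268 — 2 statements merged into one kernel-verified Lean document; each statement's English description precedes it below -/
import Mathlib

section
/- Let (Y_i) be i.i.d. real-valued random variables, each Y_i ≥ 0, with E[Y_1] < γ for some constant γ > 0, and suppose P(Y_1 < γ) > 0. Then the infimum over j ∈ ℕ of P(∑_{i=1}^{ℓ} Y_i < γ·ℓ for all ℓ = 1, ..., j) is strictly positive; equivalently, P(∑_{i=1}^{ℓ} Y_i < γ·ℓ for all ℓ ≥ 1) > 0. -/
open MeasureTheory ProbabilityTheory Finset

section AuxIid

variable {Ω : Type*} [MeasurableSpace Ω] {μ : Measure Ω} [IsProbabilityMeasure μ]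

/-- The law of the tuple `(Y N, ..., Y (N+K-1))` of an iid sequence is the product measure,
independently of `N`. -/
lemma iid_tuple_map_eq (Y : ℕ → Ω → ℝ) (hmeas : ∀ i, Measurable (Y i))
    (hindep : iIndepFun Y μ)
    (hident : ∀ i, IdentDistrib (Y i) (Y 0) μ μ) (N K : ℕ) :
    Measure.map (fun ω (i : Fin K) => Y (N + i) ω) μ
      = Measure.pi (fun _ : Fin K => Measure.map (Y 0) μ) := by
  refine (Measure.pi_eq fun s hs => ?_).symm
  classical
  let sets : ℕ → Set ℝ := fun j => if h : N ≤ j ∧ j - N < K then s ⟨j - N, h.2⟩ else Set.univ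
  have hsets : ∀ (i : ℕ) (h : i < K), sets (N + i) = s ⟨i, h⟩ := by
    intro i h
    have hc : N ≤ N + i ∧ N + i - N < K := ⟨Nat.le_add_right _ _, by simpa using h⟩
    show (if h : N ≤ N + i ∧ N + i - N < K then s ⟨N + i - N, h.2⟩ else Set.univ) = s ⟨i, h⟩
    rw [dif_pos hc]
    exact congrArg s (Fin.ext (by simp))
  have hsets_meas : ∀ j, MeasurableSet (sets j) := by
    intro j
    show MeasurableSet (if h : N ≤ j ∧ j - N < K then s ⟨j - N, h.2⟩ else Set.univ)
    split_ifs with h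
    · exact hs _
    · exact MeasurableSet.univ
  have hmap : Measurable (fun ω (i : Fin K) => Y (N + i) ω) :=
    measurable_pi_lambda _ fun i => hmeas _
  rw [Measure.map_apply hmap (MeasurableSet.univ_pi hs)]
  have hpre : (fun ω (i : Fin K) => Y (N + i) ω) ⁻¹' Set.pi Set.univ s
      = ⋂ j ∈ (Finset.range K).image (fun i => N + i), Y j ⁻¹' sets j := by
    ext ω
    simp only [Set.mem_preimage, Set.mem_pi, Set.mem_univ, forall_true_left, Set.mem_iInter,
      Finset.mem_image, Finset.mem_range, Set.mem_preimage]
    constructor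
    · rintro h j ⟨i, hi, rfl⟩
      rw [hsets i hi]; exact h ⟨i, hi⟩
    · intro h i
      have := h (N + (i : ℕ)) ⟨i, i.2, rfl⟩
      rwa [hsets i i.2] at this
  rw [hpre, hindep.measure_inter_preimage_eq_mul _ (fun j _ => hsets_meas j),
    Finset.prod_image (by intro a _ b _ h; simp only at h; omega)]
  rw [← Fin.prod_univ_eq_prod_range (fun i => μ (Y (N + i) ⁻¹' sets (N + i))) K]
  refine Finset.prod_congr rfl fun i _ => ?_
  rw [hsets i i.2, Measure.map_apply (hmeas 0) (hs i)]
  exact (hident (N + i)).measure_mem_eq (hs i)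

/-- The probability that all partial sums of the shifted sequence stay below a line does not
depend on the shift. -/
lemma shift_event_measure (Y : ℕ → Ω → ℝ) (hmeas : ∀ i, Measurable (Y i))
    (hindep : iIndepFun Y μ)
    (hident : ∀ i, IdentDistrib (Y i) (Y 0) μ μ) (c m : ℝ) (N : ℕ) :
    μ {ω | ∀ k : ℕ, ∑ i ∈ range k, Y (N + i) ω ≤ c * k + m}
      = μ {ω | ∀ k : ℕ, ∑ i ∈ range k, Y i ω ≤ c * k + m} := by
  classical
  have key : ∀ (N' K : ℕ), μ {ω | ∀ k ≤ K, ∑ i ∈ range k, Y (N' + i) ω ≤ c * k + m}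
      = Measure.pi (fun _ : Fin K => Measure.map (Y 0) μ)
        {f : Fin K → ℝ |
          ∀ k ≤ K, (∑ i ∈ range k, (if h : i < K then f ⟨i, h⟩ else 0)) ≤ c * k + m} := by
    intro N' K
    have hGm : MeasurableSet {f : Fin K → ℝ |
        ∀ k ≤ K, (∑ i ∈ range k, (if h : i < K then f ⟨i, h⟩ else 0)) ≤ c * k + m} := by
      have : {f : Fin K → ℝ |
          ∀ k ≤ K, (∑ i ∈ range k, (if h : i < K then f ⟨i, h⟩ else 0)) ≤ c * k + m}
          = ⋂ k ∈ Set.Iic K, {f : Fin K → ℝ |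
            (∑ i ∈ range k, (if h : i < K then f ⟨i, h⟩ else 0)) ≤ c * k + m} := by
        ext f; simp [Set.mem_iInter]
      rw [this]
      refine MeasurableSet.biInter (Set.to_countable _) fun k _ => ?_
      refine measurableSet_le ?_ measurable_const
      refine Finset.measurable_sum _ fun i _ => ?_
      by_cases h : i < K
      · simpa [h] using measurable_pi_apply (⟨i, h⟩ : Fin K)
      · simpa [h] using measurable_const
    rw [← iid_tuple_map_eq Y hmeas hindep hident N' K,
      Measure.map_apply (measurable_pi_lambda _ fun i => hmeas _) hGm]
    congr 1
    ext ω
    simp only [Set.mem_preimage, Set.mem_setOf_eq]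
    refine forall_congr' fun k => ?_
    refine imp_congr_right fun hk => ?_
    have hsum : (∑ i ∈ range k,
          (if h : i < K then (fun j : Fin K => Y (N' + (j : ℕ)) ω) ⟨i, h⟩ else 0))
        = ∑ i ∈ range k, Y (N' + i) ω := by
      refine Finset.sum_congr rfl fun i hi => ?_
      have h : i < K := lt_of_lt_of_le (mem_range.mp hi) hk
      simp [h]
    rw [hsum]
  have Fmeas : ∀ (N' K : ℕ),
      MeasurableSet {ω | ∀ k ≤ K, ∑ i ∈ range k, Y (N' + i) ω ≤ c * k + m} := by
    intro N' K
    have : {ω | ∀ k ≤ K, ∑ i ∈ range k, Y (N' + i) ω ≤ c * k + m}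
        = ⋂ k ∈ Set.Iic K, {ω | ∑ i ∈ range k, Y (N' + i) ω ≤ c * k + m} := by
      ext ω; simp [Set.mem_iInter]
    rw [this]
    exact MeasurableSet.biInter (Set.to_countable _) fun k _ =>
      measurableSet_le (Finset.measurable_sum _ fun i _ => hmeas _) measurable_const
  have hInter : ∀ N' : ℕ, {ω | ∀ k : ℕ, ∑ i ∈ range k, Y (N' + i) ω ≤ c * k + m}
      = ⋂ K, {ω | ∀ k ≤ K, ∑ i ∈ range k, Y (N' + i) ω ≤ c * k + m} := by
    intro N'; ext ω
    simp only [Set.mem_setOf_eq, Set.mem_iInter]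
    exact ⟨fun h K k hk => h k, fun h k => h k k le_rfl⟩
  have hanti : ∀ N', Antitone fun K =>
      {ω | ∀ k ≤ K, ∑ i ∈ range k, Y (N' + i) ω ≤ c * k + m} :=
    fun N' K K' hKK' ω hω k hk => hω k (hk.trans hKK')
  have h1 := tendsto_measure_iInter_atTop (μ := μ)
    (fun K => (Fmeas N K).nullMeasurableSet) (hanti N) ⟨0, measure_ne_top μ _⟩
  have h2 := tendsto_measure_iInter_atTop (μ := μ)
    (fun K => (Fmeas 0 K).nullMeasurableSet) (hanti 0) ⟨0, measure_ne_top μ _⟩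
  have heqfun : (μ ∘ fun K => {ω | ∀ k ≤ K, ∑ i ∈ range k, Y (N + i) ω ≤ c * k + m})
      = (μ ∘ fun K => {ω | ∀ k ≤ K, ∑ i ∈ range k, Y (0 + i) ω ≤ c * k + m}) :=
    funext fun K => (key N K).trans (key 0 K).symm
  rw [heqfun] at h1
  have h0 : {ω | ∀ k : ℕ, ∑ i ∈ range k, Y i ω ≤ c * k + m}
      = {ω | ∀ k : ℕ, ∑ i ∈ range k, Y (0 + i) ω ≤ c * k + m} := by
    simp only [Nat.zero_add]
  rw [hInter N, h0, hInter 0]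
  exact tendsto_nhds_unique h1 h2

end AuxIid

/-- For i.i.d. nonnegative integrable random variables `Yᵢ` with `E[Y₁] < γ` and
`P(Y₁ < γ) > 0`, the event that `Y₁ + ⋯ + Y_ℓ < γ·ℓ` for all `ℓ ≥ 1` has positive
probability (equivalently, the infimum over `j` of the probabilities of the finite-horizon
events is positive). -/
theorem iid_sums_stay_below_line
    {Ω : Type*} [MeasurableSpace Ω] (μ : Measure Ω) [IsProbabilityMeasure μ]
    (Y : ℕ → Ω → ℝ) (hmeas : ∀ i, Measurable (Y i))
    (hindep : iIndepFun Y μ)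
    (hident : ∀ i, IdentDistrib (Y i) (Y 0) μ μ)
    (hnonneg : ∀ i ω, 0 ≤ Y i ω) (hint : Integrable (Y 0) μ)
    (γ : ℝ) (hγ : 0 < γ) (hmean : ∫ ω, Y 0 ω ∂μ < γ)
    (hpos : 0 < μ {ω | Y 0 ω < γ}) :
    0 < μ {ω | ∀ ℓ : ℕ, 1 ≤ ℓ → ∑ i ∈ range ℓ, Y i ω < γ * ℓ} := by
  classical
  set m : ℝ := ∫ ω, Y 0 ω ∂μ with hm_def
  have hm0 : 0 ≤ m := integral_nonneg (hnonneg 0)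
  set c : ℝ := (m + γ) / 2 with hc_def
  have hmc : m < c := by rw [hc_def]; linarith
  have hcγ : c < γ := by rw [hc_def]; linarith
  have hc0 : 0 ≤ c := le_of_lt (lt_of_le_of_lt hm0 hmc)
  -- a δ < γ with positive mass below δ
  obtain ⟨n, hn⟩ : ∃ n : ℕ, 0 < μ {ω | Y 0 ω < γ - 1 / (n + 1)} := by
    by_contra h
    push_neg at h
    have hsub : {ω | Y 0 ω < γ} ⊆ ⋃ n : ℕ, {ω | Y 0 ω < γ - 1 / (n + 1)} := by
      intro ω hω
      have hω' : Y 0 ω < γ := hω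
      obtain ⟨n', hn'⟩ := exists_nat_one_div_lt (sub_pos.mpr hω')
      exact Set.mem_iUnion.mpr ⟨n', by
        simp only [Set.mem_setOf_eq]
        have : (1:ℝ) / (n' + 1) < γ - Y 0 ω := hn'
        linarith⟩
    have hnull : μ (⋃ n : ℕ, {ω | Y 0 ω < γ - 1 / (n + 1)}) = 0 :=
      measure_iUnion_null fun n' => le_antisymm (h n') (zero_le)
    have : μ {ω | Y 0 ω < γ} = 0 :=
      le_antisymm (le_trans (measure_mono hsub) (le_of_eq hnull)) (zero_le)
    exact absurd this (ne_of_gt hpos)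
  set δ : ℝ := γ - 1 / (n + 1) with hδ_def
  have hδγ : δ < γ := by
    have h1 : (0:ℝ) < 1 / ((n:ℝ) + 1) := by positivity
    rw [hδ_def]; linarith
  -- SLLN
  have hpair : Pairwise (Function.onFun (IndepFun · · μ) Y) := fun i j hij => hindep.indepFun hij
  have hslln := strong_law_ae_real Y hint hpair hident
  -- a.e. the partial sums stay below the line c·k + M for some natural M
  have h1 : ∀ᵐ ω ∂μ, ∃ M : ℕ, ∀ k : ℕ, ∑ i ∈ range k, Y i ω ≤ c * k + M := by
    filter_upwards [hslln] with ω hω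
    have hev : ∀ᶠ k : ℕ in Filter.atTop, (∑ i ∈ range k, Y i ω) / k < c :=
      hω.eventually_lt_const hmc
    obtain ⟨n₀, hn₀⟩ := Filter.eventually_atTop.mp hev
    refine ⟨(Finset.range (n₀ + 1)).sup fun k => ⌈∑ i ∈ range k, Y i ω⌉₊, fun k => ?_⟩
    rcases le_or_gt k n₀ with hk | hk
    · have h1' : (∑ i ∈ range k, Y i ω) ≤ (⌈∑ i ∈ range k, Y i ω⌉₊ : ℝ) := Nat.le_ceil _
      have h2' : ((⌈∑ i ∈ range k, Y i ω⌉₊ : ℕ) : ℝ)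
          ≤ (((Finset.range (n₀ + 1)).sup fun k => ⌈∑ i ∈ range k, Y i ω⌉₊ : ℕ) : ℝ) := by
        exact_mod_cast Finset.le_sup (f := fun k => ⌈∑ i ∈ range k, Y i ω⌉₊) (mem_range.mpr (Nat.lt_succ_of_le hk))
      have h3' : 0 ≤ c * k := mul_nonneg hc0 (Nat.cast_nonneg k)
      linarith
    · have hk0 : 0 < k := by omega
      have hkpos : (0:ℝ) < k := by exact_mod_cast hk0
      have hdiv := hn₀ k hk.le
      have hsum : ∑ i ∈ range k, Y i ω < c * k := by rwa [div_lt_iff₀ hkpos] at hdiv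
      have h3' : (0:ℝ) ≤ (((Finset.range (n₀ + 1)).sup fun k => ⌈∑ i ∈ range k, Y i ω⌉₊ : ℕ) : ℝ) :=
        Nat.cast_nonneg _
      linarith
  -- choose M with positive probability
  obtain ⟨M, hM⟩ : ∃ M : ℕ, 0 < μ {ω | ∀ k : ℕ, ∑ i ∈ range k, Y i ω ≤ c * k + M} := by
    by_contra h
    push_neg at h
    have hnull : μ (⋃ M : ℕ, {ω | ∀ k : ℕ, ∑ i ∈ range k, Y i ω ≤ c * k + M}) = 0 :=
      measure_iUnion_null fun M => le_antisymm (h M) (zero_le)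
    have hcompl :
        μ ({ω | ∃ M : ℕ, ∀ k : ℕ, ∑ i ∈ range k, Y i ω ≤ c * k + M}ᶜ) = 0 := by
      have := ae_iff.mp h1
      simpa [Set.compl_setOf] using this
    have hU : {ω | ∃ M : ℕ, ∀ k : ℕ, ∑ i ∈ range k, Y i ω ≤ c * k + M}
        = ⋃ M : ℕ, {ω | ∀ k : ℕ, ∑ i ∈ range k, Y i ω ≤ c * k + M} := by
      ext ω; simp
    have hone : (1 : ENNReal) ≤ 0 := by
      calc (1 : ENNReal) = μ Set.univ := measure_univ.symm
        _ = μ ({ω | ∃ M : ℕ, ∀ k : ℕ, ∑ i ∈ range k, Y i ω ≤ c * k + M}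
              ∪ {ω | ∃ M : ℕ, ∀ k : ℕ, ∑ i ∈ range k, Y i ω ≤ c * k + M}ᶜ) := by
            rw [Set.union_compl_self]
        _ ≤ μ {ω | ∃ M : ℕ, ∀ k : ℕ, ∑ i ∈ range k, Y i ω ≤ c * k + M}
              + μ ({ω | ∃ M : ℕ, ∀ k : ℕ, ∑ i ∈ range k, Y i ω ≤ c * k + M}ᶜ) :=
            measure_union_le _ _
        _ = 0 := by rw [hU, hnull, zero_add, ← hU]; exact hcompl
    exact absurd hone (by simp)
  -- choose N
  have hγδ : 0 < γ - δ := sub_pos.mpr hδγ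
  set N : ℕ := max 1 ⌈(M : ℝ) / (γ - δ)⌉₊ with hN_def
  have hN1 : 1 ≤ N := le_max_left _ _
  have hNM : (M : ℝ) ≤ (γ - δ) * N := by
    have h1' : (M : ℝ) / (γ - δ) ≤ (⌈(M : ℝ) / (γ - δ)⌉₊ : ℝ) := Nat.le_ceil _
    have h2' : ((⌈(M : ℝ) / (γ - δ)⌉₊ : ℕ) : ℝ) ≤ (N : ℝ) := by
      exact_mod_cast le_max_right 1 ⌈(M : ℝ) / (γ - δ)⌉₊
    have := (div_le_iff₀ hγδ).mp (h1'.trans h2')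
    linarith [this]
  -- the two events
  set A : Set Ω := ⋂ i ∈ Finset.range N, Y i ⁻¹' Set.Iio δ with hA_def
  set B : Set Ω := {ω | ∀ k : ℕ, ∑ i ∈ range k, Y (N + i) ω ≤ c * k + M} with hB_def
  have hBpos : 0 < μ B := by
    rw [hB_def, shift_event_measure Y hmeas hindep hident c M N]
    exact hM
  have hApos : 0 < μ A := by
    have hprod := hindep.measure_inter_preimage_eq_mul (sets := fun _ => Set.Iio δ)
      (Finset.range N) (fun i _ => measurableSet_Iio)
    have hfac : ∀ i : ℕ, μ (Y i ⁻¹' Set.Iio δ) = μ {ω | Y 0 ω < δ} := by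
      intro i
      have := (hident i).measure_mem_eq (measurableSet_Iio (a := δ))
      rw [this]; rfl
    rw [hA_def, hprod]
    have : ∏ i ∈ Finset.range N, μ (Y i ⁻¹' Set.Iio δ) = μ {ω | Y 0 ω < δ} ^ N := by
      rw [Finset.prod_congr rfl fun i _ => hfac i, Finset.prod_const, Finset.card_range]
    rw [this]
    have hδn : 0 < μ {ω | Y 0 ω < δ} := by rw [hδ_def]; exact hn
    exact ENNReal.pow_pos hδn N
  -- independence of A and B
  set t : Set ℕ := {i | i < N} with ht_def
  have hIndep2 : Indep (⨆ i ∈ t, MeasurableSpace.comap (Y i) inferInstance)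
      (⨆ i ∈ tᶜ, MeasurableSpace.comap (Y i) inferInstance) μ :=
    indep_biSup_compl (fun i => (hmeas i).comap_le) hindep t
  have hAmeas : MeasurableSet[⨆ i ∈ t, MeasurableSpace.comap (Y i) inferInstance] A := by
    rw [hA_def]
    refine MeasurableSet.biInter (Finset.range N).countable_toSet fun i hi => ?_
    have hle : MeasurableSpace.comap (Y i) inferInstance
        ≤ ⨆ j ∈ t, MeasurableSpace.comap (Y j) inferInstance :=
      le_iSup₂ (f := fun j (_ : j ∈ t) => MeasurableSpace.comap (Y j) inferInstance) i
        (by simp only [ht_def, Set.mem_setOf_eq]; exact mem_range.mp hi)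
    exact hle _ ⟨Set.Iio δ, measurableSet_Iio, rfl⟩
  have hBmeas : MeasurableSet[⨆ i ∈ tᶜ, MeasurableSpace.comap (Y i) inferInstance] B := by
    have hYm : ∀ i : ℕ, N ≤ i →
        Measurable[⨆ j ∈ tᶜ, MeasurableSpace.comap (Y j) inferInstance] (Y i) := by
      intro i hi
      refine Measurable.of_comap_le ?_
      exact le_iSup₂ (f := fun j (_ : j ∈ tᶜ) => MeasurableSpace.comap (Y j) inferInstance) i
        (by simp only [ht_def, Set.mem_compl_iff, Set.mem_setOf_eq]; omega)
    have hBeq : B = ⋂ k : ℕ, {ω | ∑ i ∈ range k, Y (N + i) ω ≤ c * k + M} := by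
      rw [hB_def]; ext ω; simp [Set.mem_iInter]
    rw [hBeq]
    refine MeasurableSet.iInter fun k => ?_
    exact measurableSet_le
      (Finset.measurable_sum _ fun i _ => hYm (N + i) (Nat.le_add_right _ _)) measurable_const
  have hAB : μ (A ∩ B) = μ A * μ B := (Indep_iff _ _ μ).mp hIndep2 A B hAmeas hBmeas
  -- A ∩ B is contained in the target event
  have hAω' : ∀ ω ∈ A, ∀ i < N, Y i ω < δ := by
    intro ω hω i hi
    have := Set.mem_iInter₂.mp hω i (mem_range.mpr hi)
    simpa using this
  have hsub : A ∩ B ⊆ {ω | ∀ ℓ : ℕ, 1 ≤ ℓ → ∑ i ∈ range ℓ, Y i ω < γ * ℓ} := by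
    rintro ω ⟨hωA, hωB⟩ ℓ hℓ
    have hAω : ∀ i < N, Y i ω < δ := hAω' ω hωA
    have hBω : ∀ k : ℕ, ∑ i ∈ range k, Y (N + i) ω ≤ c * k + M := hωB
    rcases le_or_gt ℓ N with hcase | hcase
    · have hlt : ∑ i ∈ range ℓ, Y i ω < (ℓ : ℝ) * δ := by
        have := Finset.sum_lt_sum_of_nonempty (s := range ℓ)
          (nonempty_range_iff.mpr (by omega)) (f := fun i => Y i ω) (g := fun _ => δ)
          (fun i hi => hAω i (lt_of_lt_of_le (mem_range.mp hi) hcase))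
        simpa [Finset.sum_const, Finset.card_range, nsmul_eq_mul] using this
      have hδℓ : (ℓ : ℝ) * δ ≤ (ℓ : ℝ) * γ :=
        mul_le_mul_of_nonneg_left hδγ.le (Nat.cast_nonneg ℓ)
      calc ∑ i ∈ range ℓ, Y i ω < (ℓ : ℝ) * δ := hlt
        _ ≤ (ℓ : ℝ) * γ := hδℓ
        _ = γ * ℓ := mul_comm _ _
    · set k : ℕ := ℓ - N with hk_def
      have hk1 : 1 ≤ k := by omega
      have hℓ' : ℓ = N + k := by omega
      have hfirst : ∑ i ∈ range N, Y i ω < (N : ℝ) * δ := by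
        have := Finset.sum_lt_sum_of_nonempty (s := range N)
          (nonempty_range_iff.mpr (by omega)) (f := fun i => Y i ω) (g := fun _ => δ)
          (fun i hi => hAω i (mem_range.mp hi))
        simpa [Finset.sum_const, Finset.card_range, nsmul_eq_mul] using this
      have hsecond := hBω k
      have hck : (1 : ℝ) ≤ (k : ℝ) := by exact_mod_cast hk1
      have hprod : (γ - c) * 1 ≤ (γ - c) * (k : ℝ) :=
        mul_le_mul_of_nonneg_left hck (by linarith)
      have hineq : (N : ℝ) * δ + (c * k + M) ≤ γ * ((N : ℝ) + k) := by
        nlinarith [hNM, hprod]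
      rw [hℓ', Finset.sum_range_add]
      push_cast
      linarith
  calc (0 : ENNReal) < μ A * μ B := ENNReal.mul_pos (ne_of_gt hApos) (ne_of_gt hBpos)
    _ = μ (A ∩ B) := hAB.symm
    _ ≤ μ {ω | ∀ ℓ : ℕ, 1 ≤ ℓ → ∑ i ∈ range ℓ, Y i ω < γ * ℓ} := measure_mono hsub
end

section
/- Let X and Y be random variables with P(X > s | G) ≤ P(Y > s) for all real s, where Y is independent of the σ-field G and X is measurable with respect to a larger σ-field. Then for any bounded increasing function f of one variable and any G-measurable bounded increasing function g of previously revealed variables, E[g·f(X)] ≤ E[g·f(Y)]. -/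
open MeasureTheory ProbabilityTheory

section Aux

variable {Ω : Type*} [m0 : MeasurableSpace Ω] {μ : Measure Ω} [IsProbabilityMeasure μ]

lemma aux_ind_abs_le (s : Set Ω) (ω : Ω) : |s.indicator (fun _ => (1:ℝ)) ω| ≤ 1 := by
  by_cases h : ω ∈ s <;> simp [Set.indicator_apply, h]

lemma aux_integrable_mul_bdd {g h : Ω → ℝ} (hgm : AEStronglyMeasurable g μ)
    (hhm : AEStronglyMeasurable h μ) {Cg Ch : ℝ}
    (hgC : ∀ ω, |g ω| ≤ Cg) (hhC : ∀ ω, |h ω| ≤ Ch) :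
    Integrable (fun ω => g ω * h ω) μ := by
  refine Integrable.mono' (integrable_const (Cg * Ch)) (hgm.mul hhm) ?_
  filter_upwards with ω
  rw [Real.norm_eq_abs, abs_mul]
  exact mul_le_mul (hgC ω) (hhC ω) (abs_nonneg _) ((abs_nonneg _).trans (hgC ω))

lemma aux_integral_ind {s : Set Ω} (hs : MeasurableSet s) :
    ∫ ω, s.indicator (fun _ => (1:ℝ)) ω ∂μ = (μ s).toReal := by
  exact integral_indicator_one (μ := μ) hs

lemma aux_key (μ : Measure Ω) [IsProbabilityMeasure μ] (G : MeasurableSpace Ω) (hG : G ≤ m0)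
    (X Y : Ω → ℝ) (hX : Measurable[m0] X) (hY : Measurable[m0] Y)
    (hYindep : Indep (MeasurableSpace.comap Y inferInstance) G μ)
    {g : Ω → ℝ} (hg : Measurable[G] g) (hg0 : ∀ ω, 0 ≤ g ω) {Cg : ℝ} (hgC : ∀ ω, g ω ≤ Cg)
    (s : ℝ)
    (hdom : ∀ᵐ ω ∂μ,
      (μ[Set.indicator {ω' | s < X ω'} (fun _ => (1 : ℝ)) | G]) ω
        ≤ (μ {ω' | s < Y ω'}).toReal) :
    ∫ ω, g ω * ({ω' | s < X ω'}.indicator (fun _ => (1:ℝ)) ω) ∂μ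
      ≤ ∫ ω, g ω * ({ω' | s < Y ω'}.indicator (fun _ => (1:ℝ)) ω) ∂μ := by
  haveI : SigmaFinite (μ.trim hG) := by infer_instance
  have gm : Measurable[m0] g := fun t ht => hG _ (hg ht)
  have hgabs : ∀ ω, |g ω| ≤ max Cg 0 := fun ω => by
    rw [abs_of_nonneg (hg0 ω)]; exact le_max_of_le_left (hgC ω)
  have hint_g : Integrable g μ := by
    refine Integrable.mono' (integrable_const (μ := μ) (max Cg 0)) (gm.aestronglyMeasurable (μ := μ)) ?_
    filter_upwards with ω using (Real.norm_eq_abs _ ▸ hgabs ω)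
  set hX1 : Ω → ℝ := {ω' | s < X ω'}.indicator (fun _ => (1:ℝ)) with hX1def
  set hY1 : Ω → ℝ := {ω' | s < Y ω'}.indicator (fun _ => (1:ℝ)) with hY1def
  have hXs : MeasurableSet[m0] {ω' | s < X ω'} := measurableSet_lt measurable_const hX
  have hYs : MeasurableSet[m0] {ω' | s < Y ω'} := measurableSet_lt measurable_const hY
  have hX1m : Measurable[m0] hX1 := measurable_const.indicator hXs
  have hY1m : Measurable[m0] hY1 := measurable_const.indicator hYs
  have hX1i : Integrable hX1 μ := by
    refine Integrable.mono' (integrable_const 1) (hX1m.aestronglyMeasurable (μ := μ)) ?_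
    filter_upwards with ω using (Real.norm_eq_abs _ ▸ aux_ind_abs_le _ ω)
  set c : ℝ := (μ {ω' | s < Y ω'}).toReal with hc
  -- step 1 : LHS = ∫ g * E[hX1 | G]
  have hpull : μ[g * hX1 | G] =ᵐ[μ] g * μ[hX1 | G] :=
    condExp_stronglyMeasurable_mul_of_bound hG hg.stronglyMeasurable hX1i (max Cg 0)
      (Filter.Eventually.of_forall fun ω => Real.norm_eq_abs _ ▸ hgabs ω)
  have step1 : ∫ ω, g ω * hX1 ω ∂μ = ∫ ω, g ω * (μ[hX1 | G]) ω ∂μ := by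
    have h1 : ∫ ω, g ω * hX1 ω ∂μ = ∫ ω, (μ[g * hX1 | G]) ω ∂μ :=
      (integral_condExp hG).symm
    rw [h1, integral_congr_ae hpull]; rfl
  -- step 2 : bound by c * ∫ g
  have hcondint : Integrable (fun ω => g ω * (μ[hX1 | G]) ω) μ := by
    have := (integrable_condExp (m := G) (f := hX1) (μ := μ)).bdd_mul
      (c := max Cg 0) (gm.aestronglyMeasurable (μ := μ))
      (Filter.Eventually.of_forall fun ω => Real.norm_eq_abs _ ▸ hgabs ω)
    exact this
  have step2 : ∫ ω, g ω * (μ[hX1 | G]) ω ∂μ ≤ ∫ ω, g ω * c ∂μ := by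
    refine integral_mono_ae hcondint (hint_g.mul_const c) ?_
    filter_upwards [hdom] with ω hω
    exact mul_le_mul_of_nonneg_left hω (hg0 ω)
  -- step 3 : RHS = c * ∫ g
  have step3 : ∫ ω, g ω * hY1 ω ∂μ = ∫ ω, g ω * c ∂μ := by
    have hφ : Measurable ((Set.Ioi s).indicator (fun _ => (1:ℝ))) :=
      measurable_const.indicator measurableSet_Ioi
    have hcomp : hY1 = fun ω => (Set.Ioi s).indicator (fun _ => (1:ℝ)) (Y ω) := by
      funext ω; simp [hY1def, Set.indicator_apply, Set.mem_Ioi]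
    have hYle : MeasurableSpace.comap hY1 inferInstance ≤ MeasurableSpace.comap Y inferInstance := by
      rw [hcomp]
      exact Measurable.comap_le (hφ.comp (Measurable.of_comap_le le_rfl))
    have hind : IndepFun hY1 g μ :=
      indep_of_indep_of_le_left (indep_of_indep_of_le_right hYindep hg.comap_le) hYle
    have := hind.integral_mul_eq_mul_integral (hY1m.aestronglyMeasurable (μ := μ)) (gm.aestronglyMeasurable (μ := μ))
    have hintY1 : ∫ ω, hY1 ω ∂μ = c := by
      rw [hY1def, aux_integral_ind (m0 := m0) (μ := μ) hYs]
    calc ∫ ω, g ω * hY1 ω ∂μ = ∫ ω, hY1 ω * g ω ∂μ := by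
          simp_rw [mul_comm]
      _ = (∫ ω, hY1 ω ∂μ) * ∫ ω, g ω ∂μ := this
      _ = c * ∫ ω, g ω ∂μ := by rw [hintY1]
      _ = ∫ ω, g ω * c ∂μ := by rw [integral_mul_const]; ring
  rw [step3]
  rw [step1]
  exact step2


lemma aux_key_ge (μ : Measure Ω) [IsProbabilityMeasure μ] (G : MeasurableSpace Ω) (hG : G ≤ m0)
    (X Y : Ω → ℝ) (hX : Measurable[m0] X) (hY : Measurable[m0] Y)
    (hYindep : Indep (MeasurableSpace.comap Y inferInstance) G μ)
    {g : Ω → ℝ} (hg : Measurable[G] g) (hg0 : ∀ ω, 0 ≤ g ω) {Cg : ℝ} (hgC : ∀ ω, g ω ≤ Cg)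
    (hdom : ∀ s : ℝ, ∀ᵐ ω ∂μ,
      (μ[Set.indicator {ω' | s < X ω'} (fun _ => (1 : ℝ)) | G]) ω
        ≤ (μ {ω' | s < Y ω'}).toReal)
    (s : ℝ) :
    ∫ ω, g ω * ({ω' | s ≤ X ω'}.indicator (fun _ => (1:ℝ)) ω) ∂μ
      ≤ ∫ ω, g ω * ({ω' | s ≤ Y ω'}.indicator (fun _ => (1:ℝ)) ω) ∂μ := by
  have gm : Measurable[m0] g := fun t ht => hG _ (hg ht)
  have hgabs : ∀ ω, |g ω| ≤ max Cg 0 := fun ω => by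
    rw [abs_of_nonneg (hg0 ω)]; exact le_max_of_le_left (hgC ω)
  -- pointwise convergence of indicators
  have keyptwise : ∀ (Z : Ω → ℝ) (ω : Ω),
      Filter.Tendsto (fun n : ℕ => ({ω' | s - 1/(n+1) < Z ω'}.indicator (fun _ => (1:ℝ)) ω))
        Filter.atTop (nhds (({ω' | s ≤ Z ω'}.indicator (fun _ => (1:ℝ)) ω))) := by
    intro Z ω
    by_cases h : s ≤ Z ω
    · have h1 : ∀ n : ℕ, ({ω' | s - 1/(n+1) < Z ω'}.indicator (fun _ => (1:ℝ)) ω) = 1 := by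
        intro n
        have hpos : (0:ℝ) < 1/(n+1) := by positivity
        have h3 : s - 1/(n+1) < Z ω := by linarith
        simp only [Set.indicator_apply, Set.mem_setOf_eq]
        rw [if_pos h3]
      have h2 : ({ω' | s ≤ Z ω'}.indicator (fun _ => (1:ℝ)) ω) = 1 := by
        simp [Set.indicator_apply, Set.mem_setOf_eq, h]
      rw [h2]
      exact Filter.Tendsto.congr (fun n => (h1 n).symm) tendsto_const_nhds
    · push_neg at h
      have h2 : ({ω' | s ≤ Z ω'}.indicator (fun _ => (1:ℝ)) ω) = 0 := by
        simp [Set.indicator_apply, Set.mem_setOf_eq, not_le.mpr h]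
      rw [h2]
      obtain ⟨n0, hn0⟩ := exists_nat_one_div_lt (by linarith : (0:ℝ) < s - Z ω)
      refine Filter.Tendsto.congr' ?_ tendsto_const_nhds
      filter_upwards [Filter.eventually_ge_atTop n0] with n hn
      have hle : (1:ℝ)/(n+1) ≤ 1/(n0+1) := by
        apply one_div_le_one_div_of_le (by positivity)
        have : (n0:ℝ) ≤ n := Nat.cast_le.mpr hn
        linarith
      have : ¬ (s - 1/(n+1) < Z ω) := by
        push_neg
        have : (1:ℝ)/(n+1) < s - Z ω := lt_of_le_of_lt hle hn0
        linarith
      simp only [Set.indicator_apply, Set.mem_setOf_eq]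
      rw [if_neg this]
  -- dominated convergence
  have tendZ : ∀ (Z : Ω → ℝ), Measurable[m0] Z →
      Filter.Tendsto (fun n : ℕ => ∫ ω, g ω * ({ω' | s - 1/(n+1) < Z ω'}.indicator (fun _ => (1:ℝ)) ω) ∂μ)
        Filter.atTop (nhds (∫ ω, g ω * ({ω' | s ≤ Z ω'}.indicator (fun _ => (1:ℝ)) ω) ∂μ)) := by
    intro Z hZ
    refine tendsto_integral_of_dominated_convergence (fun ω => max Cg 0) ?_ ?_ ?_ ?_
    · intro n
      exact ((gm.mul (measurable_const.indicator
        (measurableSet_lt measurable_const hZ))).aestronglyMeasurable (μ := μ))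
    · exact integrable_const _
    · intro n
      filter_upwards with ω
      rw [Real.norm_eq_abs, abs_mul]
      calc |g ω| * |_| ≤ max Cg 0 * 1 :=
            mul_le_mul (hgabs ω) (aux_ind_abs_le _ ω) (abs_nonneg _)
              (le_max_right _ _)
        _ = max Cg 0 := mul_one _
    · filter_upwards with ω
      exact (keyptwise Z ω).const_mul (g ω)
  refine le_of_tendsto_of_tendsto' (tendZ X hX) (tendZ Y hY) fun n => ?_
  exact aux_key (m0 := m0) μ G hG X Y hX hY hYindep hg hg0 hgC (s - 1/(n+1)) (hdom _)

lemma aux_key_f (μ : Measure Ω) [IsProbabilityMeasure μ] (G : MeasurableSpace Ω) (hG : G ≤ m0)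
    (X Y : Ω → ℝ) (hX : Measurable[m0] X) (hY : Measurable[m0] Y)
    (hYindep : Indep (MeasurableSpace.comap Y inferInstance) G μ)
    {g : Ω → ℝ} (hg : Measurable[G] g) (hg0 : ∀ ω, 0 ≤ g ω) {Cg : ℝ} (hgC : ∀ ω, g ω ≤ Cg)
    (hdom : ∀ s : ℝ, ∀ᵐ ω ∂μ,
      (μ[Set.indicator {ω' | s < X ω'} (fun _ => (1 : ℝ)) | G]) ω
        ≤ (μ {ω' | s < Y ω'}).toReal)
    {f : ℝ → ℝ} (hf : Monotone f) (t : ℝ) :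
    ∫ ω, g ω * ({ω' | t < f (X ω')}.indicator (fun _ => (1:ℝ)) ω) ∂μ
      ≤ ∫ ω, g ω * ({ω' | t < f (Y ω')}.indicator (fun _ => (1:ℝ)) ω) ∂μ := by
  by_cases hex : ∃ x, t < f x
  · obtain ⟨x0, hx0⟩ := hex
    by_cases hall : ∀ x, t < f x
    · have eX : {ω' | t < f (X ω')} = Set.univ := by ext ω; simp [hall _]
      have eY : {ω' | t < f (Y ω')} = Set.univ := by ext ω; simp [hall _]
      rw [eX, eY]
    · push_neg at hall
      obtain ⟨a, ha⟩ := hall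
      have ha' : ¬ t < f a := not_lt.mpr ha
      set S : Set ℝ := {x | t < f x} with hS
      have bdd : BddBelow S := by
        refine ⟨a, fun x hx => ?_⟩
        by_contra hxa
        push_neg at hxa
        exact ha' (lt_of_lt_of_le hx (hf hxa.le))
      set s := sInf S with hs_def
      have hIoi : ∀ x, s < x → t < f x := by
        intro x hx
        obtain ⟨y, hyS, hyx⟩ := exists_lt_of_csInf_lt (s := S) ⟨x0, hx0⟩ hx
        exact lt_of_lt_of_le hyS (hf hyx.le)
      by_cases hsS : t < f s
      · have eX : {ω' | t < f (X ω')} = {ω' | s ≤ X ω'} := by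
          ext ω
          simp only [Set.mem_setOf_eq]
          exact ⟨fun h => csInf_le bdd h, fun h => lt_of_lt_of_le hsS (hf h)⟩
        have eY : {ω' | t < f (Y ω')} = {ω' | s ≤ Y ω'} := by
          ext ω
          simp only [Set.mem_setOf_eq]
          exact ⟨fun h => csInf_le bdd h, fun h => lt_of_lt_of_le hsS (hf h)⟩
        rw [eX, eY]
        exact aux_key_ge (m0 := m0) μ G hG X Y hX hY hYindep hg hg0 hgC hdom s
      · have eX : {ω' | t < f (X ω')} = {ω' | s < X ω'} := by
          ext ω
          simp only [Set.mem_setOf_eq]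
          refine ⟨fun h => ?_, fun h => hIoi _ h⟩
          refine lt_of_le_of_ne (csInf_le bdd h) fun e => hsS ?_
          rwa [e]
        have eY : {ω' | t < f (Y ω')} = {ω' | s < Y ω'} := by
          ext ω
          simp only [Set.mem_setOf_eq]
          refine ⟨fun h => ?_, fun h => hIoi _ h⟩
          refine lt_of_le_of_ne (csInf_le bdd h) fun e => hsS ?_
          rwa [e]
        rw [eX, eY]
        exact aux_key (m0 := m0) μ G hG X Y hX hY hYindep hg hg0 hgC s (hdom s)
  · push_neg at hex
    have eX : {ω' | t < f (X ω')} = (∅ : Set Ω) := by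
      ext ω; simp [not_lt.mpr (hex _)]
    have eY : {ω' | t < f (Y ω')} = (∅ : Set Ω) := by
      ext ω; simp [not_lt.mpr (hex _)]
    rw [eX, eY]

end Aux

/-- If `P(X > s | G) ≤ P(Y > s)` for all real `s`, with `Y` independent of the sub-σ-field
`G`, then for every bounded increasing `f : ℝ → ℝ` and every nonnegative bounded
`G`-measurable weight `g` (an increasing function of the previously revealed variables),
`E[g·f(X)] ≤ E[g·f(Y)]`. -/
theorem conditional_domination_test_functions
    {Ω : Type*} (G : MeasurableSpace Ω) [m0 : MeasurableSpace Ω] (μ : Measure Ω) [IsProbabilityMeasure μ]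
    (hG : G ≤ m0)
    (X Y : Ω → ℝ) (hX : Measurable X) (hY : Measurable Y)
    (hYindep : Indep (MeasurableSpace.comap Y inferInstance) G μ)
    (hdom : ∀ s : ℝ, ∀ᵐ ω ∂μ,
      (μ[Set.indicator {ω' | s < X ω'} (fun _ => (1 : ℝ)) | G]) ω
        ≤ (μ {ω' | s < Y ω'}).toReal)
    (f : ℝ → ℝ) (hf : Monotone f) (hfmeas : Measurable f) (hfbdd : ∃ C, ∀ x, |f x| ≤ C)
    (g : Ω → ℝ) (hg : Measurable[G] g) (hg0 : ∀ ω, 0 ≤ g ω) (hgbdd : ∃ C, ∀ ω, g ω ≤ C) :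
    ∫ ω, g ω * f (X ω) ∂μ ≤ ∫ ω, g ω * f (Y ω) ∂μ := by
  classical
  obtain ⟨Cf, hCf⟩ := hfbdd
  obtain ⟨Cg, hCg⟩ := hgbdd
  have Xm : Measurable[m0] X := hX
  have Ym : Measurable[m0] Y := hY
  have gm : Measurable[m0] g := fun t ht => hG _ (hg ht)
  have hgabs : ∀ ω, |g ω| ≤ max Cg 0 := fun ω => by
    rw [abs_of_nonneg (hg0 ω)]; exact le_max_of_le_left (hCg ω)
  set C : ℝ := max Cf 0 + 1 with hCdef
  have hC0 : (0:ℝ) < C := by positivity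
  have hfC : ∀ x, |f x| ≤ C := fun x => by
    have := hCf x; have := le_max_left Cf 0; linarith
  have hfub : ∀ x, f x ≤ C := fun x => (le_abs_self _).trans (hfC x)
  have hflb : ∀ x, -C ≤ f x := fun x => (abs_le.mp (hfC x)).1
  have hIg : Integrable g μ := by
    refine Integrable.mono' (integrable_const (μ := μ) (max Cg 0)) (gm.aestronglyMeasurable (μ := μ)) ?_
    filter_upwards with ω using (Real.norm_eq_abs _ ▸ hgabs ω)
  have hIg0 : 0 ≤ ∫ ω, g ω ∂μ := integral_nonneg hg0
  have hIgf : ∀ Z : Ω → ℝ, Measurable[m0] Z → Integrable (fun ω => g ω * f (Z ω)) μ :=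
    fun Z hZ => aux_integrable_mul_bdd (m0 := m0) (gm.aestronglyMeasurable (μ := μ))
      (((hfmeas.comp hZ)).aestronglyMeasurable (μ := μ)) hgabs (fun ω => hfC (Z ω))
  -- main estimate for any positive mesh δ
  have main : ∀ δ : ℝ, 0 < δ →
      ∫ ω, g ω * f (X ω) ∂μ ≤ ∫ ω, g ω * f (Y ω) ∂μ + δ * ∫ ω, g ω ∂μ := by
    intro δ hδ
    set N : ℕ := max 1 ⌈2*C/δ⌉₊ with hN
    have hNδ : 2*C ≤ (N:ℝ) * δ := by
      have h1 : 2*C/δ ≤ (⌈2*C/δ⌉₊ : ℝ) := Nat.le_ceil _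
      have h2 : ((⌈2*C/δ⌉₊ : ℕ):ℝ) ≤ (N:ℝ) := Nat.cast_le.mpr (le_max_right _ _)
      calc 2*C = (2*C/δ)*δ := by field_simp
        _ ≤ (N:ℝ)*δ := mul_le_mul_of_nonneg_right (h1.trans h2) hδ.le
    obtain ⟨m, hm⟩ : ∃ m, N = m + 1 := ⟨N - 1, by omega⟩
    set F : ℝ → ℝ := fun x =>
      -C + ∑ k ∈ Finset.range N, δ * (if -C + ((k:ℝ)+1)*δ < f x then (1:ℝ) else 0) with hF
    have hsum_id : ∀ v : ℝ, 0 ≤ v → v ≤ (N:ℝ)*δ →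
        ∑ k ∈ Finset.range N, (min v (((k:ℝ)+1)*δ) - min v ((k:ℝ)*δ)) = v := by
      intro v hv0 hvN
      have h := Finset.sum_range_sub (fun k : ℕ => min v ((k:ℝ)*δ)) N
      push_cast at h
      rw [h]
      simp [min_eq_left hvN, min_eq_right hv0]
    have hFle : ∀ x, F x ≤ f x := by
      intro x
      have hv0 : (0:ℝ) ≤ f x + C := by have := hflb x; linarith
      have hvN : f x + C ≤ (N:ℝ)*δ := by have := hfub x; linarith
      have hterm : ∀ k ∈ Finset.range N,
          δ * (if -C + ((k:ℝ)+1)*δ < f x then (1:ℝ) else 0)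
            ≤ min (f x + C) (((k:ℝ)+1)*δ) - min (f x + C) ((k:ℝ)*δ) := by
        intro k _
        have hk0 : (0:ℝ) ≤ (k:ℝ) := Nat.cast_nonneg k
        by_cases hk : -C + ((k:ℝ)+1)*δ < f x
        · rw [if_pos hk]
          have h1 : ((k:ℝ)+1)*δ ≤ f x + C := by linarith
          have h2 : (k:ℝ)*δ ≤ f x + C := by nlinarith
          rw [min_eq_right h1, min_eq_right h2]
          ring_nf
          nlinarith
        · rw [if_neg hk]
          have : min (f x + C) ((k:ℝ)*δ) ≤ min (f x + C) (((k:ℝ)+1)*δ) :=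
            min_le_min le_rfl (by nlinarith)
          linarith
      have := Finset.sum_le_sum hterm
      rw [hsum_id (f x + C) hv0 hvN] at this
      simp only [hF]
      linarith
    have hFge : ∀ x, f x - δ ≤ F x := by
      intro x
      have hv0 : (0:ℝ) ≤ f x + C := by have := hflb x; linarith
      have hvN : f x + C ≤ (N:ℝ)*δ := by have := hfub x; linarith
      have h1 : f x + C ≤ ∑ k ∈ Finset.range N, δ * (if (k:ℝ)*δ < f x + C then (1:ℝ) else 0) := by
        refine le_trans (le_of_eq (hsum_id (f x + C) hv0 hvN).symm)
          (Finset.sum_le_sum fun k _ => ?_)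
        have hk0 : (0:ℝ) ≤ (k:ℝ) := Nat.cast_nonneg k
        by_cases hk : (k:ℝ)*δ < f x + C
        · rw [if_pos hk]
          have h2 : min (f x + C) ((k:ℝ)*δ) = (k:ℝ)*δ := min_eq_right hk.le
          have h3 : min (f x + C) (((k:ℝ)+1)*δ) ≤ ((k:ℝ)+1)*δ := min_le_right _ _
          rw [h2]
          nlinarith
        · rw [if_neg hk]
          push_neg at hk
          have h2 : min (f x + C) ((k:ℝ)*δ) = f x + C := min_eq_left hk
          have h3 : min (f x + C) (((k:ℝ)+1)*δ) = f x + C := min_eq_left (by nlinarith)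
          rw [h2, h3]
          simp
      have h2 : ∑ k ∈ Finset.range N, δ * (if (k:ℝ)*δ < f x + C then (1:ℝ) else 0)
          ≤ δ + ∑ k ∈ Finset.range N, δ * (if -C + ((k:ℝ)+1)*δ < f x then (1:ℝ) else 0) := by
        rw [hm, Finset.sum_range_succ' (fun k : ℕ => δ * (if (k:ℝ)*δ < f x + C then (1:ℝ) else 0)) m]
        have ha : δ * (if ((0:ℕ):ℝ)*δ < f x + C then (1:ℝ) else 0) ≤ δ := by
          split <;> simp [hδ.le]
        have hb : ∑ k ∈ Finset.range m, δ * (if ((k:ℕ)+1:ℝ)*δ < f x + C then (1:ℝ) else 0)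
            ≤ ∑ k ∈ Finset.range (m+1), δ * (if -C + ((k:ℝ)+1)*δ < f x then (1:ℝ) else 0) := by
          have hcongr : ∀ k : ℕ, (if ((k:ℕ)+1:ℝ)*δ < f x + C then (1:ℝ) else 0)
              = (if -C + ((k:ℝ)+1)*δ < f x then (1:ℝ) else 0) := by
            intro k
            refine if_congr ?_ rfl rfl
            push_cast
            constructor <;> intro <;> linarith
          calc ∑ k ∈ Finset.range m, δ * (if ((k:ℕ)+1:ℝ)*δ < f x + C then (1:ℝ) else 0)
              = ∑ k ∈ Finset.range m, δ * (if -C + ((k:ℝ)+1)*δ < f x then (1:ℝ) else 0) :=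
                Finset.sum_congr rfl fun k _ => by rw [hcongr k]
            _ ≤ ∑ k ∈ Finset.range (m+1), δ * (if -C + ((k:ℝ)+1)*δ < f x then (1:ℝ) else 0) := by
                refine Finset.sum_le_sum_of_subset_of_nonneg
                  (Finset.range_subset_range.mpr (Nat.le_succ m)) fun k _ _ => ?_
                split <;> positivity
        push_cast
        push_cast at ha hb
        linarith
      simp only [hF]
      have : (N:ℕ) = m + 1 := hm
      linarith
    have hFmeas : Measurable F := by
      refine measurable_const.add (Finset.measurable_sum _ fun k _ => ?_)
      exact (Measurable.ite (measurableSet_lt measurable_const hfmeas)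
        measurable_const measurable_const).const_mul δ
    have hFabs : ∀ x, |F x| ≤ C + δ := fun x => abs_le.mpr
      ⟨by have := hFge x; have := hflb x; linarith, by have := hFle x; have := hfub x; linarith⟩
    have hIgF : ∀ Z : Ω → ℝ, Measurable[m0] Z → Integrable (fun ω => g ω * F (Z ω)) μ :=
      fun Z hZ => aux_integrable_mul_bdd (m0 := m0) (gm.aestronglyMeasurable (μ := μ))
        (((hFmeas.comp hZ)).aestronglyMeasurable (μ := μ)) hgabs (fun ω => hFabs (Z ω))
    -- decomposition of ∫ g·F(Z)
    have hdecomp : ∀ Z : Ω → ℝ, Measurable[m0] Z →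
        ∫ ω, g ω * F (Z ω) ∂μ
          = (∫ ω, g ω ∂μ) * (-C)
            + ∑ k ∈ Finset.range N, δ * ∫ ω, g ω *
                ({ω' | -C + ((k:ℝ)+1)*δ < f (Z ω')}.indicator (fun _ => (1:ℝ)) ω) ∂μ := by
      intro Z hZ
      have hterm : ∀ k : ℕ, Integrable (fun ω => g ω *
          ({ω' | -C + ((k:ℝ)+1)*δ < f (Z ω')}.indicator (fun _ => (1:ℝ)) ω)) μ := fun k =>
        aux_integrable_mul_bdd (m0 := m0) (gm.aestronglyMeasurable (μ := μ))
          (((measurable_const.indicator (measurableSet_lt measurable_const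
            (hfmeas.comp hZ)) : Measurable[m0] _)).aestronglyMeasurable (μ := μ))
          hgabs (aux_ind_abs_le (m0 := m0) _)
      have hpt : (fun ω => g ω * F (Z ω)) = fun ω =>
          g ω * (-C) + ∑ k ∈ Finset.range N, δ * (g ω *
            ({ω' | -C + ((k:ℝ)+1)*δ < f (Z ω')}.indicator (fun _ => (1:ℝ)) ω)) := by
        funext ω
        simp only [hF, Set.indicator_apply, Set.mem_setOf_eq, mul_add, Finset.mul_sum]
        congr 1
        exact Finset.sum_congr rfl fun k _ => by ring
      rw [hpt, integral_add (hIg.mul_const (-C))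
        (integrable_finset_sum _ fun k _ => (hterm k).const_mul δ),
        integral_finset_sum _ fun k _ => (hterm k).const_mul δ, integral_mul_const]
      congr 1
      exact Finset.sum_congr rfl fun k _ => integral_const_mul δ _
    have hstep : ∫ ω, g ω * F (X ω) ∂μ ≤ ∫ ω, g ω * F (Y ω) ∂μ := by
      rw [hdecomp X Xm, hdecomp Y Ym]
      refine add_le_add le_rfl (Finset.sum_le_sum fun k _ => ?_)
      exact mul_le_mul_of_nonneg_left
        (aux_key_f (m0 := m0) μ G hG X Y Xm Ym hYindep hg hg0 hCg hdom hf _) hδ.le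
    have h1 : ∫ ω, g ω * f (X ω) ∂μ ≤ ∫ ω, (g ω * F (X ω) + δ * g ω) ∂μ := by
      refine integral_mono (hIgf X Xm) ((hIgF X Xm).add (hIg.const_mul δ)) fun ω => ?_
      have h2 := hFge (X ω)
      nlinarith [hg0 ω, mul_le_mul_of_nonneg_left (show f (X ω) ≤ F (X ω) + δ by linarith) (hg0 ω)]
    rw [integral_add (hIgF X Xm) (hIg.const_mul δ), integral_const_mul] at h1
    have h2 : ∫ ω, g ω * F (Y ω) ∂μ ≤ ∫ ω, g ω * f (Y ω) ∂μ :=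
      integral_mono (hIgF Y Ym) (hIgf Y Ym) fun ω =>
        mul_le_mul_of_nonneg_left (hFle (Y ω)) (hg0 ω)
    linarith
  refine le_of_forall_pos_le_add fun ε hε => ?_
  have hδ : 0 < ε / ((∫ ω, g ω ∂μ) + 1) := by positivity
  have h := main _ hδ
  have hfin : (ε / ((∫ ω, g ω ∂μ) + 1)) * (∫ ω, g ω ∂μ) ≤ ε := by
    rw [div_mul_eq_mul_div, div_le_iff₀ (by linarith)]
    nlinarith
  linarith
end
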